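/- arXiv:1107.5690 — 6 statements merged into one kernel-verified Lean document; each statement's English description precedes it below -/
import Mathlib

section
/- There exist constants C > 0 and M > 0 such that for all real ξ with |ξ| ≥ M one has |Ξ_*(ξ) − 1 − (μ₁ + μ₂)/(μ₁μ₂κ|ξ|) + λ²/ξ²| ≤ C/|ξ|³; that is, Ξ_*(ξ) = 1 + (μ₁+μ₂)/(μ₁μ₂κ|ξ|) − λ²/ξ² + O(|ξ|^{−3}) as ξ → ±∞ along the real axis. -/
open Real Filter

/-- The hyperbolic cotangent on ℝ. -/
noncomputable def coth (x : ℝ) : ℝ := Real.cosh x / Real.sinh x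

lemma coth_neg (x : ℝ) : coth (-x) = - coth x := by
  simp [coth, Real.cosh_neg, Real.sinh_neg, div_neg]

lemma one_le_coth {x : ℝ} (hx : 0 < x) : 1 ≤ coth x := by
  have hs : 0 < Real.sinh x := Real.sinh_pos_iff.2 hx
  rw [coth, le_div_iff₀ hs]
  have h := Real.cosh_sub_sinh x
  have h2 : 0 < Real.exp (-x) := Real.exp_pos _
  linarith

lemma coth_sub_one_le {x : ℝ} (hx : 5 ≤ x) : coth x - 1 ≤ 8 / x ^ 3 := by
  have hx0 : 0 < x := by linarith
  have hs : 0 < Real.sinh x := Real.sinh_pos_iff.2 hx0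
  have h1 : (x/2 + 1) ^ 4 ≤ Real.exp (x/2) ^ 4 :=
    pow_le_pow_left₀ (by linarith) (Real.add_one_le_exp (x/2)) 4
  have h2 : Real.exp (x/2) ^ 4 = Real.exp (2*x) := by
    rw [← Real.exp_nat_mul]; norm_num; ring_nf
  have h0 : (x/2)^4 ≤ (x/2+1)^4 := pow_le_pow_left₀ (by linarith) (by linarith) 4
  have hexp : x^4/16 ≤ Real.exp (2*x) := by nlinarith [h1, h2, h0]
  have h125 : 125 ≤ x^3 := by nlinarith [sq_nonneg x]
  have hkey : x^3 ≤ 4 * Real.exp (2*x) - 4 := by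
    nlinarith [hexp, mul_nonneg (by linarith : (0:ℝ) ≤ x^3 - 125) (by linarith : (0:ℝ) ≤ x - 4)]
  have he3 : Real.exp (2*x) * Real.exp (-x) = Real.exp x := by
    rw [← Real.exp_add]; ring_nf
  have hen : 0 < Real.exp (-x) := Real.exp_pos _
  rw [coth, div_sub_one hs.ne', Real.cosh_sub_sinh,
    div_le_div_iff₀ hs (by positivity : (0:ℝ) < x^3), Real.sinh_eq]
  nlinarith [mul_nonneg (by linarith : (0:ℝ) ≤ 4*Real.exp (2*x) - 4 - x^3) hen.le, he3]

/-- The function `Ξ_*(ξ) = ξ(μ₁ coth(ξH₂) + μ₂ coth(ξH₁) + μ₁μ₂κξ)/(μ₁μ₂κ(λ² + ξ²))`,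
extended by `Ξ_*(0) = 1`. -/
noncomputable def XiStar (μ₁ μ₂ H₁ H₂ κ lam : ℝ) (ξ : ℝ) : ℝ :=
  if ξ = 0 then 1
  else ξ * (μ₁ * coth (ξ * H₂) + μ₂ * coth (ξ * H₁) + μ₁ * μ₂ * κ * ξ) /
        (μ₁ * μ₂ * κ * (lam ^ 2 + ξ ^ 2))

set_option maxHeartbeats 1600000 in
/-- `Ξ_*(ξ) = 1 + (μ₁+μ₂)/(μ₁μ₂κ|ξ|) − λ²/ξ² + O(|ξ|⁻³)` as `ξ → ±∞`. -/
theorem statement3 (μ₁ μ₂ H₁ H₂ κ lam : ℝ)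
    (hμ₁ : 0 < μ₁) (hμ₂ : 0 < μ₂) (hH₁ : 0 < H₁) (hH₂ : 0 < H₂) (hκ : 0 < κ)
    (hlam : lam = Real.sqrt ((μ₁ * H₁ + μ₂ * H₂) / (μ₁ * μ₂ * H₁ * H₂ * κ))) :
    ∃ C > (0 : ℝ), ∃ M > (0 : ℝ), ∀ ξ : ℝ, M ≤ |ξ| →
      |XiStar μ₁ μ₂ H₁ H₂ κ lam ξ - 1 - (μ₁ + μ₂) / (μ₁ * μ₂ * κ * |ξ|) + lam ^ 2 / ξ ^ 2|
        ≤ C / |ξ| ^ 3 := by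
  refine ⟨lam ^ 4 + (μ₁ + μ₂) * lam ^ 2 / (μ₁ * μ₂ * κ)
      + (8 * μ₁ / H₂ ^ 3 + 8 * μ₂ / H₁ ^ 3) / (μ₁ * μ₂ * κ) + 1, by positivity,
    max 1 (max (5 / H₁) (5 / H₂)), lt_of_lt_of_le one_pos (le_max_left _ _), ?_⟩
  intro ξ hξ
  obtain ⟨t, ht⟩ : ∃ t, |ξ| = t := ⟨_, rfl⟩
  rw [ht] at hξ ⊢
  have ht1 : 1 ≤ t := le_trans (le_max_left _ _) hξ
  have ht0 : 0 < t := by linarith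
  have hξ0 : ξ ≠ 0 := abs_pos.mp (ht ▸ ht0)
  have hH1t : 5 ≤ t * H₁ := by
    have h := le_trans (le_trans (le_max_left _ _) (le_max_right _ _)) hξ
    rw [div_le_iff₀ hH₁] at h; linarith
  have hH2t : 5 ≤ t * H₂ := by
    have h := le_trans (le_trans (le_max_right _ _) (le_max_right _ _)) hξ
    rw [div_le_iff₀ hH₂] at h; linarith
  have hodd : ∀ H : ℝ, ξ * coth (ξ * H) = t * coth (t * H) := by
    intro H
    rcases abs_cases ξ with ⟨h, _⟩ | ⟨h, _⟩
    · rw [← ht, h]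
    · rw [← ht, h, show -ξ * H = -(ξ * H) from by ring, coth_neg]; ring
  rw [XiStar, if_neg hξ0,
    show ξ * (μ₁ * coth (ξ * H₂) + μ₂ * coth (ξ * H₁) + μ₁ * μ₂ * κ * ξ)
      = μ₁ * (ξ * coth (ξ * H₂)) + μ₂ * (ξ * coth (ξ * H₁)) + μ₁ * μ₂ * κ * ξ ^ 2 from by ring,
    hodd H₂, hodd H₁, show ξ ^ 2 = t ^ 2 from by rw [← sq_abs ξ, ht]]
  obtain ⟨c₁, hc₁⟩ : ∃ c, coth (t * H₂) - 1 = c := ⟨_, rfl⟩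
  obtain ⟨c₂, hc₂⟩ : ∃ c, coth (t * H₁) - 1 = c := ⟨_, rfl⟩
  have hc1 : c₁ ≤ 8 / (t * H₂) ^ 3 := hc₁ ▸ coth_sub_one_le hH2t
  have hc2 : c₂ ≤ 8 / (t * H₁) ^ 3 := hc₂ ▸ coth_sub_one_le hH1t
  have hc1' : 0 ≤ c₁ := by
    have := one_le_coth (show 0 < t * H₂ by positivity); linarith [hc₁]
  have hc2' : 0 ≤ c₂ := by
    have := one_le_coth (show 0 < t * H₁ by positivity); linarith [hc₂]
  rw [show coth (t * H₂) = 1 + c₁ from by rw [← hc₁]; ring,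
    show coth (t * H₁) = 1 + c₂ from by rw [← hc₂]; ring]
  have hden : (0:ℝ) < lam ^ 2 + t ^ 2 := by positivity
  have hid : (μ₁ * (t * (1 + c₁)) + μ₂ * (t * (1 + c₂)) + μ₁ * μ₂ * κ * t ^ 2)
        / (μ₁ * μ₂ * κ * (lam ^ 2 + t ^ 2))
      - 1 - (μ₁ + μ₂) / (μ₁ * μ₂ * κ * t) + lam ^ 2 / t ^ 2
      = lam ^ 4 / (t ^ 2 * (lam ^ 2 + t ^ 2))
        - (μ₁ + μ₂) * lam ^ 2 / (μ₁ * μ₂ * κ * (t * (lam ^ 2 + t ^ 2)))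
        + t * (μ₁ * c₁ + μ₂ * c₂) / (μ₁ * μ₂ * κ * (lam ^ 2 + t ^ 2)) := by
    field_simp
    ring
  rw [hid]
  have hT1 : lam ^ 4 / (t ^ 2 * (lam ^ 2 + t ^ 2)) ≤ lam ^ 4 / t ^ 3 := by
    gcongr
    nlinarith [mul_nonneg (sq_nonneg t) (sq_nonneg lam),
      mul_nonneg (mul_nonneg (mul_nonneg ht0.le ht0.le) ht0.le) (sub_nonneg.2 ht1)]
  have hT2 : (μ₁ + μ₂) * lam ^ 2 / (μ₁ * μ₂ * κ * (t * (lam ^ 2 + t ^ 2)))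
      ≤ (μ₁ + μ₂) * lam ^ 2 / (μ₁ * μ₂ * κ * t ^ 3) := by
    gcongr
    nlinarith [mul_nonneg ht0.le (sq_nonneg lam),
      mul_nonneg (mul_nonneg (mul_nonneg ht0.le ht0.le) ht0.le) (sub_nonneg.2 ht1)]
  have hT3 : t * (μ₁ * c₁ + μ₂ * c₂) / (μ₁ * μ₂ * κ * (lam ^ 2 + t ^ 2))
      ≤ (8 * μ₁ / H₂ ^ 3 + 8 * μ₂ / H₁ ^ 3) / (μ₁ * μ₂ * κ * t ^ 3) := by
    have h5 : t * (μ₁ * c₁ + μ₂ * c₂) / (μ₁ * μ₂ * κ * (lam ^ 2 + t ^ 2))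
        ≤ t * (μ₁ * (8 / (t * H₂) ^ 3) + μ₂ * (8 / (t * H₁) ^ 3)) / (μ₁ * μ₂ * κ * t ^ 2) := by
      gcongr
      nlinarith [sq_nonneg lam]
    have h6 : t * (μ₁ * (8 / (t * H₂) ^ 3) + μ₂ * (8 / (t * H₁) ^ 3)) / (μ₁ * μ₂ * κ * t ^ 2)
        = (8 * μ₁ / H₂ ^ 3 + 8 * μ₂ / H₁ ^ 3) / (μ₁ * μ₂ * κ * t ^ 4) := by
      field_simp
    have h7 : (8 * μ₁ / H₂ ^ 3 + 8 * μ₂ / H₁ ^ 3) / (μ₁ * μ₂ * κ * t ^ 4)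
        ≤ (8 * μ₁ / H₂ ^ 3 + 8 * μ₂ / H₁ ^ 3) / (μ₁ * μ₂ * κ * t ^ 3) := by
      rw [div_le_div_iff₀ (by positivity) (by positivity)]
      have ht34 : t ^ 3 ≤ t ^ 4 := pow_le_pow_right₀ ht1 (by norm_num)
      have hB : (0:ℝ) < μ₁ * μ₂ * κ := by positivity
      have hK0 : (0:ℝ) ≤ 8 * μ₁ / H₂ ^ 3 + 8 * μ₂ / H₁ ^ 3 := by positivity
      nlinarith [mul_le_mul_of_nonneg_left
        (mul_le_mul_of_nonneg_left ht34 hB.le) hK0]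
    linarith [h6 ▸ h5]
  have hN1 : 0 ≤ lam ^ 4 / (t ^ 2 * (lam ^ 2 + t ^ 2)) := by positivity
  have hN2 : 0 ≤ (μ₁ + μ₂) * lam ^ 2 / (μ₁ * μ₂ * κ * (t * (lam ^ 2 + t ^ 2))) := by positivity
  have hN3 : 0 ≤ t * (μ₁ * c₁ + μ₂ * c₂) / (μ₁ * μ₂ * κ * (lam ^ 2 + t ^ 2)) := by
    apply div_nonneg _ (by positivity)
    exact mul_nonneg ht0.le (add_nonneg (mul_nonneg hμ₁.le hc1') (mul_nonneg hμ₂.le hc2'))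
  calc |lam ^ 4 / (t ^ 2 * (lam ^ 2 + t ^ 2))
        - (μ₁ + μ₂) * lam ^ 2 / (μ₁ * μ₂ * κ * (t * (lam ^ 2 + t ^ 2)))
        + t * (μ₁ * c₁ + μ₂ * c₂) / (μ₁ * μ₂ * κ * (lam ^ 2 + t ^ 2))|
      ≤ |lam ^ 4 / (t ^ 2 * (lam ^ 2 + t ^ 2))
          - (μ₁ + μ₂) * lam ^ 2 / (μ₁ * μ₂ * κ * (t * (lam ^ 2 + t ^ 2)))|
        + |t * (μ₁ * c₁ + μ₂ * c₂) / (μ₁ * μ₂ * κ * (lam ^ 2 + t ^ 2))| := abs_add_le _ _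
    _ ≤ (|lam ^ 4 / (t ^ 2 * (lam ^ 2 + t ^ 2))|
          + |(μ₁ + μ₂) * lam ^ 2 / (μ₁ * μ₂ * κ * (t * (lam ^ 2 + t ^ 2)))|)
        + |t * (μ₁ * c₁ + μ₂ * c₂) / (μ₁ * μ₂ * κ * (lam ^ 2 + t ^ 2))| :=
          add_le_add_left (abs_sub _ _) _
    _ ≤ (lam ^ 4 / t ^ 3 + (μ₁ + μ₂) * lam ^ 2 / (μ₁ * μ₂ * κ * t ^ 3))
        + (8 * μ₁ / H₂ ^ 3 + 8 * μ₂ / H₁ ^ 3) / (μ₁ * μ₂ * κ * t ^ 3) := by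
          rw [abs_of_nonneg hN1, abs_of_nonneg hN2, abs_of_nonneg hN3]
          linarith
    _ = (lam ^ 4 + (μ₁ + μ₂) * lam ^ 2 / (μ₁ * μ₂ * κ)
          + (8 * μ₁ / H₂ ^ 3 + 8 * μ₂ / H₁ ^ 3) / (μ₁ * μ₂ * κ)) / t ^ 3 := by
          field_simp
    _ ≤ (lam ^ 4 + (μ₁ + μ₂) * lam ^ 2 / (μ₁ * μ₂ * κ)
          + (8 * μ₁ / H₂ ^ 3 + 8 * μ₂ / H₁ ^ 3) / (μ₁ * μ₂ * κ) + 1) / t ^ 3 := by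
          gcongr ?_ / t ^ 3
          linarith
end

section
/- The function t ↦ ln Ξ_*(t)/t² on ℝ ∖ {0} is Lebesgue integrable on ℝ; in particular the constant α = ∫_{0}^{∞} ln Ξ_*(t)/t² dt is finite, and ∫_{−∞}^{∞} ln Ξ_*(t)/t² dt = 2α. -/
open Real Filter

private lemma sinh_le_mul_cosh {x : ℝ} (hx : 0 ≤ x) : Real.sinh x ≤ x * Real.cosh x := by
  have key : ∀ y : ℝ, HasDerivAt (fun t : ℝ => t * Real.cosh t - Real.sinh t)
      (y * Real.sinh y) y := by
    intro y
    have h1 := ((hasDerivAt_id y).mul (Real.hasDerivAt_cosh y)).sub (Real.hasDerivAt_sinh y)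
    refine h1.congr_deriv ?_
    simp only [id_eq]
    ring
  have mono : Monotone fun t : ℝ => t * Real.cosh t - Real.sinh t := by
    apply monotone_of_deriv_nonneg (fun y => (key y).differentiableAt)
    intro y
    rw [(key y).deriv]
    rcases le_or_gt 0 y with h | h
    · exact mul_nonneg h (Real.sinh_nonneg_iff.mpr h)
    · exact mul_nonneg_iff.mpr (Or.inr ⟨h.le, Real.sinh_nonpos_iff.mpr h.le⟩)
  have h0 := mono hx
  simp only [Real.cosh_zero, Real.sinh_zero, mul_one, zero_mul, sub_zero] at h0
  linarith [h0]

private lemma mul_cosh_le_quad {x : ℝ} (hx : 0 ≤ x) :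
    x * Real.cosh x ≤ (1 + x ^ 2) * Real.sinh x := by
  have key : ∀ y : ℝ, HasDerivAt (fun t : ℝ => (1 + t ^ 2) * Real.sinh t - t * Real.cosh t)
      (y * Real.sinh y + y ^ 2 * Real.cosh y) y := by
    intro y
    have h0 : HasDerivAt (fun t : ℝ => 1 + t ^ 2) (2 * y) y := by
      simpa using (hasDerivAt_pow 2 y).const_add 1
    have h1 := (h0.mul (Real.hasDerivAt_sinh y)).sub
      ((hasDerivAt_id y).mul (Real.hasDerivAt_cosh y))
    refine h1.congr_deriv ?_
    simp only [id_eq]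
    ring
  have mono : Monotone fun t : ℝ => (1 + t ^ 2) * Real.sinh t - t * Real.cosh t := by
    apply monotone_of_deriv_nonneg (fun y => (key y).differentiableAt)
    intro y
    rw [(key y).deriv]
    have h2 : 0 ≤ y ^ 2 * Real.cosh y := mul_nonneg (sq_nonneg y) (Real.cosh_pos y).le
    rcases le_or_gt 0 y with h | h
    · have := mul_nonneg h (Real.sinh_nonneg_iff.mpr h); linarith
    · have := mul_nonneg_iff.mpr (Or.inr ⟨h.le, Real.sinh_nonpos_iff.mpr h.le⟩); linarith
  have h0 := mono hx
  simp only [Real.cosh_zero, Real.sinh_zero, mul_zero, zero_mul, sub_zero, mul_one] at h0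
  linarith [h0]

private lemma mul_cosh_le_lin {x : ℝ} (hx : 0 ≤ x) :
    x * Real.cosh x ≤ (x + 1) * Real.sinh x := by
  rw [Real.cosh_eq, Real.sinh_eq]
  have h := Real.add_one_le_exp (2 * x)
  have e : Real.exp (2 * x) = Real.exp x * Real.exp x := by
    rw [← Real.exp_add]; ring_nf
  have e2 : Real.exp x * Real.exp (-x) = 1 := by rw [← Real.exp_add]; simp
  have hn := Real.exp_pos (-x)
  have key : 0 ≤ (Real.exp x * Real.exp x - (2 * x + 1)) * Real.exp (-x) :=
    mul_nonneg (by rw [← e]; linarith) hn.le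
  nlinarith [key, e2, hn]

private lemma coth_bounds {y : ℝ} (hy : 0 < y) :
    1 ≤ y * coth y ∧ y * coth y ≤ 1 + y ^ 2 ∧ y * coth y ≤ y + 1 := by
  have hs : 0 < Real.sinh y := Real.sinh_pos_iff.mpr hy
  have he : y * coth y = y * Real.cosh y / Real.sinh y := by rw [coth]; ring
  rw [he]
  refine ⟨?_, ?_, ?_⟩
  · rw [le_div_iff₀ hs, one_mul]; exact sinh_le_mul_cosh hy.le
  · rw [div_le_iff₀ hs]; exact mul_cosh_le_quad hy.le
  · rw [div_le_iff₀ hs]; exact mul_cosh_le_lin hy.le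


private lemma XiStar_neg (μ₁ μ₂ H₁ H₂ κ lam t : ℝ) :
    XiStar μ₁ μ₂ H₁ H₂ κ lam (-t) = XiStar μ₁ μ₂ H₁ H₂ κ lam t := by
  by_cases h : t = 0
  · simp [h]
  unfold XiStar
  rw [if_neg (neg_ne_zero.mpr h), if_neg h]
  have c2 : coth (-t * H₂) = -coth (t * H₂) := by
    rw [show -t * H₂ = -(t * H₂) by ring]; unfold coth
    rw [Real.cosh_neg, Real.sinh_neg, div_neg]
  have c1 : coth (-t * H₁) = -coth (t * H₁) := by
    rw [show -t * H₁ = -(t * H₁) by ring]; unfold coth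
    rw [Real.cosh_neg, Real.sinh_neg, div_neg]
  rw [c1, c2]
  ring_nf

set_option maxHeartbeats 1000000 in
private lemma XiStar_bounds (μ₁ μ₂ H₁ H₂ κ lam : ℝ)
    (hμ₁ : 0 < μ₁) (hμ₂ : 0 < μ₂) (hH₁ : 0 < H₁) (hH₂ : 0 < H₂) (hκ : 0 < κ)
    (hlam : lam = Real.sqrt ((μ₁ * H₁ + μ₂ * H₂) / (μ₁ * μ₂ * H₁ * H₂ * κ)))
    {t : ℝ} (ht : 0 < t) :
    1 ≤ XiStar μ₁ μ₂ H₁ H₂ κ lam t ∧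
    XiStar μ₁ μ₂ H₁ H₂ κ lam t
      ≤ 1 + ((μ₁ * H₂ + μ₂ * H₁ + μ₁ * μ₂ * κ) / (μ₁ / H₂ + μ₂ / H₁)) * t ^ 2 ∧
    XiStar μ₁ μ₂ H₁ H₂ κ lam t ≤ 1 + ((μ₁ + μ₂) / (μ₁ * μ₂ * κ)) / t := by
  have hA : (0:ℝ) < μ₁ / H₂ + μ₂ / H₁ := by positivity
  have hP : (0:ℝ) < μ₁ * μ₂ * κ := by positivity
  have hsq : lam ^ 2 = (μ₁ * H₁ + μ₂ * H₂) / (μ₁ * μ₂ * H₁ * H₂ * κ) := by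
    rw [hlam]; exact Real.sq_sqrt (by positivity)
  have hPl : μ₁ * μ₂ * κ * lam ^ 2 = μ₁ / H₂ + μ₂ / H₁ := by
    rw [hsq]
    field_simp
  have hDeq : μ₁ * μ₂ * κ * (lam ^ 2 + t ^ 2) = μ₁ / H₂ + μ₂ / H₁ + μ₁ * μ₂ * κ * t ^ 2 := by
    rw [mul_add, hPl]
  have hD : 0 < μ₁ * μ₂ * κ * (lam ^ 2 + t ^ 2) := by rw [hDeq]; positivity
  -- bounds on t * coth (t * H)
  have b2 := coth_bounds (y := t * H₂) (by positivity)
  have b1 := coth_bounds (y := t * H₁) (by positivity)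
  have k2 : 1 / H₂ ≤ t * coth (t * H₂) := by
    have h := b2.1
    rw [div_le_iff₀ hH₂]
    linarith [h]
  have k1 : 1 / H₁ ≤ t * coth (t * H₁) := by
    have h := b1.1
    rw [div_le_iff₀ hH₁]
    linarith [h]
  have u2 : t * coth (t * H₂) ≤ 1 / H₂ + H₂ * t ^ 2 := by
    have h := b2.2.1
    rw [show (1:ℝ) / H₂ + H₂ * t ^ 2 = (1 + (t * H₂) ^ 2) / H₂ by field_simp,
      le_div_iff₀ hH₂]
    linarith [h]
  have u1 : t * coth (t * H₁) ≤ 1 / H₁ + H₁ * t ^ 2 := by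
    have h := b1.2.1
    rw [show (1:ℝ) / H₁ + H₁ * t ^ 2 = (1 + (t * H₁) ^ 2) / H₁ by field_simp,
      le_div_iff₀ hH₁]
    linarith [h]
  have v2 : t * coth (t * H₂) ≤ t + 1 / H₂ := by
    have h := b2.2.2
    rw [show t + 1 / H₂ = (t * H₂ + 1) / H₂ by field_simp, le_div_iff₀ hH₂]
    linarith [h]
  have v1 : t * coth (t * H₁) ≤ t + 1 / H₁ := by
    have h := b1.2.2
    rw [show t + 1 / H₁ = (t * H₁ + 1) / H₁ by field_simp, le_div_iff₀ hH₁]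
    linarith [h]
  have hXi : XiStar μ₁ μ₂ H₁ H₂ κ lam t
      = t * (μ₁ * coth (t * H₂) + μ₂ * coth (t * H₁) + μ₁ * μ₂ * κ * t) /
        (μ₁ * μ₂ * κ * (lam ^ 2 + t ^ 2)) := by
    rw [XiStar, if_neg ht.ne']
  refine ⟨?_, ?_, ?_⟩
  · rw [hXi, le_div_iff₀ hD, one_mul, hDeq]
    have p1 := mul_le_mul_of_nonneg_left k2 hμ₁.le
    have p2 := mul_le_mul_of_nonneg_left k1 hμ₂.le
    ring_nf at p1 p2 ⊢
    linarith [p1, p2]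
  · rw [hXi, div_le_iff₀ hD, hDeq]
    have p1 := mul_le_mul_of_nonneg_left u2 hμ₁.le
    have p2 := mul_le_mul_of_nonneg_left u1 hμ₂.le
    have hm2 : (μ₁ * H₂ + μ₂ * H₁ + μ₁ * μ₂ * κ) / (μ₁ / H₂ + μ₂ / H₁) * (μ₁ / H₂ + μ₂ / H₁) * t ^ 2
        = (μ₁ * H₂ + μ₂ * H₁ + μ₁ * μ₂ * κ) * t ^ 2 := by
      rw [div_mul_cancel₀ _ hA.ne']
    have hqp : 0 ≤ (μ₁ * H₂ + μ₂ * H₁ + μ₁ * μ₂ * κ) / (μ₁ / H₂ + μ₂ / H₁) * (μ₁ * μ₂ * κ) * t ^ 4 :=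
      mul_nonneg (mul_nonneg (div_nonneg (by positivity) hA.le) hP.le) (by positivity)
    have hPt : (0:ℝ) ≤ μ₁ * μ₂ * κ * t ^ 2 := by positivity
    ring_nf at p1 p2 hm2 hqp hPt ⊢
    linarith [p1, p2, hm2, hqp, hPt]
  · rw [hXi, div_le_iff₀ hD, hDeq]
    have p1 := mul_le_mul_of_nonneg_left v2 hμ₁.le
    have p2 := mul_le_mul_of_nonneg_left v1 hμ₂.le
    have h3 : (μ₁ + μ₂) / (μ₁ * μ₂ * κ) / t * (μ₁ * μ₂ * κ) * t ^ 2 = (μ₁ + μ₂) * t := by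
      field_simp
    have h4 : 0 ≤ (μ₁ + μ₂) / (μ₁ * μ₂ * κ) / t * (μ₁ / H₂ + μ₂ / H₁) :=
      mul_nonneg (div_nonneg (div_nonneg (by positivity) hP.le) ht.le) hA.le
    ring_nf at p1 p2 h3 h4 ⊢
    linarith [p1, p2, h3, h4]

set_option maxHeartbeats 1000000 in
/-- `t ↦ ln Ξ_*(t)/t²` is Lebesgue integrable on ℝ; in particular the
constant `α = ∫₀^∞ ln Ξ_*(t)/t² dt` is finite (the function is integrable on `(0,∞)`)
and `∫_ℝ ln Ξ_*(t)/t² dt = 2α`. -/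
theorem statement7 (μ₁ μ₂ H₁ H₂ κ lam : ℝ)
    (hμ₁ : 0 < μ₁) (hμ₂ : 0 < μ₂) (hH₁ : 0 < H₁) (hH₂ : 0 < H₂) (hκ : 0 < κ)
    (hlam : lam = Real.sqrt ((μ₁ * H₁ + μ₂ * H₂) / (μ₁ * μ₂ * H₁ * H₂ * κ))) :
    MeasureTheory.Integrable (fun t : ℝ => Real.log (XiStar μ₁ μ₂ H₁ H₂ κ lam t) / t ^ 2) ∧
    MeasureTheory.IntegrableOn
      (fun t : ℝ => Real.log (XiStar μ₁ μ₂ H₁ H₂ κ lam t) / t ^ 2) (Set.Ioi 0) ∧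
    ∫ t : ℝ, Real.log (XiStar μ₁ μ₂ H₁ H₂ κ lam t) / t ^ 2
      = 2 * ∫ t in Set.Ioi (0 : ℝ), Real.log (XiStar μ₁ μ₂ H₁ H₂ κ lam t) / t ^ 2 := by
  set F : ℝ → ℝ := fun t : ℝ => Real.log (XiStar μ₁ μ₂ H₁ H₂ κ lam t) / t ^ 2 with hF
  set C : ℝ := (μ₁ * H₂ + μ₂ * H₁ + μ₁ * μ₂ * κ) / (μ₁ / H₂ + μ₂ / H₁) with hC
  set M : ℝ := (μ₁ + μ₂) / (μ₁ * μ₂ * κ) with hM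
  -- measurability
  have hXm : Measurable (XiStar μ₁ μ₂ H₁ H₂ κ lam) := by
    unfold XiStar coth
    refine Measurable.ite (measurableSet_singleton 0) measurable_const ?_
    apply Measurable.div
    · apply Measurable.mul measurable_id
      apply Measurable.add
      apply Measurable.add
      · exact (measurable_const.mul ((Real.continuous_cosh.measurable.comp
          (measurable_id.mul_const H₂)).div (Real.continuous_sinh.measurable.comp
          (measurable_id.mul_const H₂))))
      · exact (measurable_const.mul ((Real.continuous_cosh.measurable.comp
          (measurable_id.mul_const H₁)).div (Real.continuous_sinh.measurable.comp
          (measurable_id.mul_const H₁))))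
      · exact measurable_const.mul measurable_id
    · exact measurable_const.mul (measurable_const.add (measurable_id.pow_const 2))
  have hFm : Measurable F := (Real.measurable_log.comp hXm).div (measurable_id.pow_const 2)
  -- pointwise bounds on Ioi 0
  have hbound : ∀ t : ℝ, 0 < t → 0 ≤ F t ∧ F t ≤ C ∧ F t ≤ M / t ^ 3 := by
    intro t ht
    obtain ⟨h1, h2, h3⟩ := XiStar_bounds μ₁ μ₂ H₁ H₂ κ lam hμ₁ hμ₂ hH₁ hH₂ hκ hlam ht
    have hXpos : 0 < XiStar μ₁ μ₂ H₁ H₂ κ lam t := lt_of_lt_of_le one_pos h1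
    have hlog0 : 0 ≤ Real.log (XiStar μ₁ μ₂ H₁ H₂ κ lam t) := Real.log_nonneg h1
    have ht2 : (0:ℝ) < t ^ 2 := by positivity
    refine ⟨div_nonneg hlog0 ht2.le, ?_, ?_⟩
    · have := (Real.log_le_sub_one_of_pos hXpos).trans (by linarith [h2] : XiStar μ₁ μ₂ H₁ H₂ κ lam t - 1 ≤ C * t ^ 2)
      rw [hF, div_le_iff₀ ht2]
      exact this
    · have hMt : XiStar μ₁ μ₂ H₁ H₂ κ lam t - 1 ≤ M / t := by linarith [h3]
      have := (Real.log_le_sub_one_of_pos hXpos).trans hMt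
      rw [hF, div_le_iff₀ ht2]
      calc Real.log (XiStar μ₁ μ₂ H₁ H₂ κ lam t) ≤ M / t := this
        _ = M / t ^ 3 * t ^ 2 := by field_simp
  -- integrability on (0, 1]
  have hI1 : MeasureTheory.IntegrableOn F (Set.Ioc 0 1) := by
    apply MeasureTheory.Integrable.mono' (g := fun _ => C)
      ((MeasureTheory.integrableOn_const_iff).mpr (Or.inr measure_Ioc_lt_top))
      hFm.aestronglyMeasurable.restrict
    filter_upwards [MeasureTheory.ae_restrict_mem measurableSet_Ioc] with t htm
    obtain ⟨h0, h1, _⟩ := hbound t htm.1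
    rw [Real.norm_eq_abs, abs_of_nonneg h0]
    exact h1
  -- integrability on (1, ∞)
  have hI2 : MeasureTheory.IntegrableOn F (Set.Ioi 1) := by
    apply MeasureTheory.Integrable.mono' (g := fun t => M * t ^ (-3 : ℝ))
      ((integrableOn_Ioi_rpow_of_lt (by norm_num) one_pos).const_mul M)
      hFm.aestronglyMeasurable.restrict
    filter_upwards [MeasureTheory.ae_restrict_mem measurableSet_Ioi] with t htm
    have ht : (0:ℝ) < t := lt_trans one_pos htm
    obtain ⟨h0, _, h2⟩ := hbound t ht
    rw [Real.norm_eq_abs, abs_of_nonneg h0]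
    calc F t ≤ M / t ^ 3 := h2
      _ = M * t ^ (-3 : ℝ) := by
          rw [Real.rpow_neg ht.le, div_eq_mul_inv]
          norm_num
  -- integrability on (0, ∞)
  have hIoi : MeasureTheory.IntegrableOn F (Set.Ioi 0) := by
    rw [← Set.Ioc_union_Ioi_eq_Ioi (zero_le_one : (0:ℝ) ≤ 1)]
    exact hI1.union hI2
  -- evenness
  have feq : ∀ t : ℝ, F (-t) = F t := by
    intro t
    show Real.log (XiStar μ₁ μ₂ H₁ H₂ κ lam (-t)) / (-t) ^ 2
      = Real.log (XiStar μ₁ μ₂ H₁ H₂ κ lam t) / t ^ 2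
    rw [XiStar_neg, show ((-t) : ℝ) ^ 2 = t ^ 2 by ring]
  have fabs : ∀ t : ℝ, F t = F |t| := by
    intro t
    rcases le_or_gt 0 t with h | h
    · rw [abs_of_nonneg h]
    · rw [abs_of_neg h]
      exact (feq t).symm
  -- integrability on ℝ
  have hInt : MeasureTheory.Integrable F := by
    rw [← MeasureTheory.integrableOn_univ, ← Set.Iio_union_Ici (a := (0:ℝ))]
    apply MeasureTheory.IntegrableOn.union
    · have m : MeasurableEmbedding (fun x : ℝ => -x) :=
        (Homeomorph.neg ℝ).measurableEmbedding
      have h1 : MeasureTheory.IntegrableOn F (Set.Iio 0)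
          (MeasureTheory.Measure.map (fun x : ℝ => -x) MeasureTheory.volume) := by
        rw [m.integrableOn_map_iff]
        have hpre : (fun x : ℝ => -x) ⁻¹' (Set.Iio 0) = Set.Ioi 0 := by
          ext x; simp
        rw [hpre]
        have : F ∘ (fun x : ℝ => -x) = F := funext fun t => feq t
        rw [this]
        exact hIoi
      rwa [MeasureTheory.Measure.map_neg_eq_self] at h1
    · exact (integrableOn_Ici_iff_integrableOn_Ioi).mpr hIoi
  refine ⟨hInt, hIoi, ?_⟩
  calc ∫ t : ℝ, F t = ∫ t : ℝ, F |t| :=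
        MeasureTheory.integral_congr_ae (Filter.Eventually.of_forall fun t => fabs t)
    _ = 2 * ∫ t in Set.Ioi (0:ℝ), F t := integral_comp_abs
end

section
/- Let ξ ∈ ℂ satisfy ξ ≠ 0, sinh(ξH₁) ≠ 0, sinh(ξH₂) ≠ 0, cosh(ξH₁) ≠ 0 and cosh(ξH₂) ≠ 0. Suppose complex numbers A₁, A₂, B₁, B₂ satisfy B_j = (−1)^j A_j tanh(ξH_j) for j = 1, 2, and μ₁B₁ = μ₂B₂. Define Φ⁻ = A₁ − A₂ − μ₁κξB₁ and Φ⁺ = μ₁ξB₁. Then Φ⁻ = −Ξ(ξ)·Φ⁺. -/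
open Real Filter

/-- The hyperbolic cotangent on ℂ. -/
noncomputable def cothC (z : ℂ) : ℂ := Complex.cosh z / Complex.sinh z

/-- if `B_j = (−1)^j A_j tanh(ξH_j)` for `j = 1,2` and `μ₁B₁ = μ₂B₂`, then
with `Φ⁻ = A₁ − A₂ − μ₁κξB₁` and `Φ⁺ = μ₁ξB₁` one has `Φ⁻ = −Ξ(ξ)·Φ⁺`, where
`Ξ(ξ) = (1/ξ)(coth(ξH₁)/μ₁ + coth(ξH₂)/μ₂ + κξ)` is the Wiener–Hopf kernel. -/
theorem statement13 (μ₁ μ₂ H₁ H₂ κ : ℝ)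
    (hμ₁ : 0 < μ₁) (hμ₂ : 0 < μ₂) (hH₁ : 0 < H₁) (hH₂ : 0 < H₂) (hκ : 0 < κ)
    (ξ : ℂ) (hξ : ξ ≠ 0)
    (hs₁ : Complex.sinh (ξ * H₁) ≠ 0) (hs₂ : Complex.sinh (ξ * H₂) ≠ 0)
    (hc₁ : Complex.cosh (ξ * H₁) ≠ 0) (hc₂ : Complex.cosh (ξ * H₂) ≠ 0)
    (A₁ A₂ B₁ B₂ : ℂ)
    (hB₁ : B₁ = (-1) ^ 1 * A₁ * Complex.tanh (ξ * H₁))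
    (hB₂ : B₂ = (-1) ^ 2 * A₂ * Complex.tanh (ξ * H₂))
    (hcont : μ₁ * B₁ = μ₂ * B₂) :
    A₁ - A₂ - μ₁ * κ * ξ * B₁ =
      -((1 / ξ) * (cothC (ξ * H₁) / μ₁ + cothC (ξ * H₂) / μ₂ + κ * ξ)) * (μ₁ * ξ * B₁) := by
  have hμ₁' : (μ₁ : ℂ) ≠ 0 := by exact_mod_cast hμ₁.ne'
  have hμ₂' : (μ₂ : ℂ) ≠ 0 := by exact_mod_cast hμ₂.ne'
  set s1 := Complex.sinh (ξ * H₁) with hs1def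
  set c1 := Complex.cosh (ξ * H₁) with hc1def
  set s2 := Complex.sinh (ξ * H₂) with hs2def
  set c2 := Complex.cosh (ξ * H₂) with hc2def
  rw [Complex.tanh_eq_sinh_div_cosh] at hB₁ hB₂
  rw [hB₂] at hcont
  rw [hB₁] at hcont
  have hA₂ : A₂ = -(μ₁ * A₁ * s1 * c2) / (μ₂ * s2 * c1) := by
    rw [← hs1def, ← hc1def, ← hs2def, ← hc2def] at hcont
    rw [eq_div_iff (by simp [hμ₂', hs₂, hc₁])]
    have h1 : c1 * c1⁻¹ = 1 := mul_inv_cancel₀ hc₁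
    have h2 : c2 * c2⁻¹ = 1 := mul_inv_cancel₀ hc₂
    linear_combination (-(c1 * c2)) * hcont - (μ₁ * A₁ * s1 * c2) * h1 - (μ₂ * A₂ * s2 * c1) * h2
  rw [hB₁, hA₂]
  unfold cothC
  rw [← hs1def, ← hc1def, ← hs2def, ← hc2def]
  have hI : (μ₂ : ℂ)⁻¹ * s2⁻¹ * c1⁻¹ * (μ₁ : ℂ)⁻¹ * s1⁻¹ * ξ⁻¹ *
      ((μ₂ : ℂ) * s2 * c1 * (μ₁ : ℂ) * s1 * ξ) = 1 := by
    field_simp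
  field_simp
  ring
end

section
/- Then lim_{t→0⁺} ln Ξ_**(t)/t² = (1/12)·(H_*³μ_* − H_*² − μ_*H_* + 1)/(1 + μ_*H_*). -/
set_option maxHeartbeats 1000000

open Real Filter

lemma sinh_lt_mul_cosh {x : ℝ} (hx : 0 < x) : Real.sinh x < x * Real.cosh x := by
  have h : StrictMonoOn (fun y => y * Real.cosh y - Real.sinh y) (Set.Ici 0) := by
    apply strictMonoOn_of_deriv_pos (convex_Ici 0)
    · exact ((continuous_id.mul Real.continuous_cosh).sub Real.continuous_sinh).continuousOn
    · intro y hy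
      rw [interior_Ici] at hy
      have hd : HasDerivAt (fun y => y * Real.cosh y - Real.sinh y) (y * Real.sinh y) y := by
        have := ((hasDerivAt_id y).mul (Real.hasDerivAt_cosh y)).sub (Real.hasDerivAt_sinh y)
        refine this.congr_deriv ?_
        simp only [id_eq]; ring
      rw [hd.deriv]
      exact mul_pos hy (Real.sinh_pos_iff.mpr hy)
  have h2 := h Set.self_mem_Ici (Set.mem_Ici.mpr hx.le) hx
  simp only [Real.sinh_zero, Real.cosh_zero] at h2
  nlinarith [h2]

lemma slope_sinh : Filter.Tendsto (fun x => Real.sinh x / x) (nhdsWithin 0 {(0:ℝ)}ᶜ) (nhds 1) := by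
  have hd : HasDerivAt Real.sinh (Real.cosh 0) 0 := Real.hasDerivAt_sinh 0
  rw [hasDerivAt_iff_tendsto_slope] at hd
  have : Real.cosh 0 = 1 := Real.cosh_zero
  rw [this] at hd
  refine hd.congr (fun x => ?_)
  simp [slope_def_field, Real.sinh_zero]

lemma lim_cube : Filter.Tendsto (fun x => (x * Real.cosh x - Real.sinh x) / x ^ 3)
    (nhdsWithin 0 (Set.Ioi 0)) (nhds (1/3)) := by
  apply HasDerivAt.lhopital_zero_nhdsGT
    (f' := fun x => x * Real.sinh x) (g' := fun x => 3 * x ^ 2)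
  · filter_upwards with x
    have := ((hasDerivAt_id x).mul (Real.hasDerivAt_cosh x)).sub (Real.hasDerivAt_sinh x)
    refine this.congr_deriv ?_
    simp only [id_eq]; ring
  · filter_upwards with x
    have := hasDerivAt_pow 3 x
    norm_num at this
    exact this
  · filter_upwards [self_mem_nhdsWithin] with x (hx : x ∈ Set.Ioi (0:ℝ))
    have hx' : x ≠ 0 := ne_of_gt hx
    positivity
  · have : Filter.Tendsto (fun x => x * Real.cosh x - Real.sinh x) (nhds 0) (nhds 0) := by
      have := ((continuous_id.mul Real.continuous_cosh).sub Real.continuous_sinh).tendsto 0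
      convert this using 2
      simp
      simp [Pi.sub_apply, Pi.mul_apply]
    exact this.mono_left nhdsWithin_le_nhds
  · have : Filter.Tendsto (fun x : ℝ => x ^ 3) (nhds 0) (nhds 0) := by
      have := (continuous_pow 3).tendsto (0:ℝ); simpa using this
    exact this.mono_left nhdsWithin_le_nhds
  · have h1 : Filter.Tendsto (fun x => Real.sinh x / x / 3) (nhdsWithin 0 (Set.Ioi 0)) (nhds (1/3)) := by
      have hsub : Set.Ioi (0:ℝ) ⊆ {(0:ℝ)}ᶜ := fun x hx => ne_of_gt hx
      exact (slope_sinh.mono_left (nhdsWithin_mono 0 hsub)).div_const 3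
    refine h1.congr' ?_
    filter_upwards [self_mem_nhdsWithin] with x hx
    have hx0 : x ≠ 0 := ne_of_gt hx
    field_simp

lemma lim_inv_sinh : Filter.Tendsto (fun x => x / Real.sinh x) (nhdsWithin 0 (Set.Ioi 0)) (nhds 1) := by
  have hsub : Set.Ioi (0:ℝ) ⊆ {(0:ℝ)}ᶜ := fun x hx => ne_of_gt hx
  have h := (slope_sinh.mono_left (nhdsWithin_mono 0 hsub)).inv₀ one_ne_zero
  rw [inv_one] at h
  refine h.congr (fun x => ?_)
  rw [← one_div, one_div_div]

lemma coth_key {a : ℝ} (ha : 0 < a) :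
    Filter.Tendsto (fun t => (t * coth (t * a / 2) - 2 / a) / t ^ 2)
      (nhdsWithin 0 (Set.Ioi 0)) (nhds (a / 6)) := by
  have hmap : Filter.Tendsto (fun t : ℝ => t * a / 2) (nhdsWithin 0 (Set.Ioi 0))
      (nhdsWithin 0 (Set.Ioi 0)) := by
    rw [tendsto_nhdsWithin_iff]
    constructor
    · have : Filter.Tendsto (fun t : ℝ => t * a / 2) (nhds 0) (nhds (0 * a / 2)) :=
        ((continuous_id.mul continuous_const).div_const 2).tendsto 0
      simpa using this.mono_left nhdsWithin_le_nhds
    · filter_upwards [self_mem_nhdsWithin] with t ht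
      exact div_pos (mul_pos ht ha) two_pos
  have hφ : Filter.Tendsto
      (fun x => a / 2 * ((x * Real.cosh x - Real.sinh x) / x ^ 3 * (x / Real.sinh x)))
      (nhdsWithin 0 (Set.Ioi 0)) (nhds (a / 2 * (1 / 3 * 1))) :=
    tendsto_const_nhds.mul (lim_cube.mul lim_inv_sinh)
  have hcomp := hφ.comp hmap
  have hval : a / 2 * (1 / 3 * 1) = a / 6 := by ring
  rw [hval] at hcomp
  refine hcomp.congr' ?_
  filter_upwards [self_mem_nhdsWithin] with t ht
  have ht0 : t ≠ 0 := ne_of_gt ht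
  have hx : 0 < t * a / 2 := div_pos (mul_pos ht ha) two_pos
  have hs : Real.sinh (t * a / 2) ≠ 0 := ne_of_gt (Real.sinh_pos_iff.mpr hx)
  show a / 2 * ((t * a / 2 * Real.cosh (t * a / 2) - Real.sinh (t * a / 2)) / (t * a / 2) ^ 3
      * (t * a / 2 / Real.sinh (t * a / 2))) = (t * coth (t * a / 2) - 2 / a) / t ^ 2
  rw [coth]
  field_simp

lemma coth_gt {a t : ℝ} (ha : 0 < a) (ht : 0 < t) : 2 / a < t * coth (t * a / 2) := by
  have hx : 0 < t * a / 2 := div_pos (mul_pos ht ha) two_pos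
  have hs : 0 < Real.sinh (t * a / 2) := Real.sinh_pos_iff.mpr hx
  have h := sinh_lt_mul_cosh hx
  rw [coth, div_lt_iff₀ ha]
  have e : t * (Real.cosh (t * a / 2) / Real.sinh (t * a / 2)) * a
      = t * a * Real.cosh (t * a / 2) / Real.sinh (t * a / 2) := by ring
  rw [e, lt_div_iff₀ hs]
  nlinarith [h]

/-- with `μ_*, H_* ∈ (−1,1)`, `κ_* > 0` and
`λ_*² = 8(1+μ_*H_*)/(κ_*(1−μ_*²)(1−H_*²))`, the function
`Ξ_**(t) = (t/(λ_*²+t²))(t + (2/(κ_*(1+μ_*)))coth(t(1+H_*)/2) + (2/(κ_*(1−μ_*)))coth(t(1−H_*)/2))`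
satisfies `lim_{t→0⁺} ln Ξ_**(t)/t² = (1/12)(H_*³μ_* − H_*² − μ_*H_* + 1)/(1 + μ_*H_*)`. -/
theorem statement17 (μs Hs κs lamSq : ℝ)
    (hμs : μs ∈ Set.Ioo (-1 : ℝ) 1) (hHs : Hs ∈ Set.Ioo (-1 : ℝ) 1) (hκs : 0 < κs)
    (hlamSq : lamSq = 8 * (1 + μs * Hs) / (κs * (1 - μs ^ 2) * (1 - Hs ^ 2)))
    (XiSS : ℝ → ℝ)
    (hXiSS : ∀ t : ℝ, XiSS t = (t / (lamSq + t ^ 2)) *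
      (t + (2 / (κs * (1 + μs))) * coth (t * (1 + Hs) / 2)
         + (2 / (κs * (1 - μs))) * coth (t * (1 - Hs) / 2))) :
    Tendsto (fun t : ℝ => Real.log (XiSS t) / t ^ 2) (nhdsWithin 0 (Set.Ioi 0))
      (nhds ((1 / 12) * (Hs ^ 3 * μs - Hs ^ 2 - μs * Hs + 1) / (1 + μs * Hs))) := by
  obtain ⟨hμ1, hμ2⟩ := hμs
  obtain ⟨hH1, hH2⟩ := hHs
  have hμp : (0:ℝ) < 1 + μs := by linarith
  have hμm : (0:ℝ) < 1 - μs := by linarith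
  have hHp : (0:ℝ) < 1 + Hs := by linarith
  have hHm : (0:ℝ) < 1 - Hs := by linarith
  have hμH : (0:ℝ) < 1 + μs * Hs := by nlinarith
  have hμsq : (0:ℝ) < 1 - μs ^ 2 := by nlinarith
  have hHsq : (0:ℝ) < 1 - Hs ^ 2 := by nlinarith
  have hlam : 0 < lamSq := by
    rw [hlamSq]
    exact div_pos (by linarith) (mul_pos (mul_pos hκs hμsq) hHsq)
  set c₁ : ℝ := 2 / (κs * (1 + μs)) with hc₁
  set c₂ : ℝ := 2 / (κs * (1 - μs)) with hc₂
  set L : ℝ := (1 / 12) * (Hs ^ 3 * μs - Hs ^ 2 - μs * Hs + 1) / (1 + μs * Hs) with hL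
  -- key identity
  have hdiff : ∀ t : ℝ, XiSS t - 1 =
      (c₁ * (t * coth (t * (1 + Hs) / 2) - 2 / (1 + Hs))
        + c₂ * (t * coth (t * (1 - Hs) / 2) - 2 / (1 - Hs))) / (lamSq + t ^ 2) := by
    intro t
    have hden : lamSq + t ^ 2 ≠ 0 := by positivity
    rw [hXiSS t, hc₁, hc₂]
    rw [hlamSq] at hden ⊢
    field_simp
    ring
  -- limit of (XiSS t - 1)/t²
  have hdenlim : Filter.Tendsto (fun t : ℝ => lamSq + t ^ 2) (nhdsWithin 0 (Set.Ioi 0))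
      (nhds lamSq) := by
    have : Filter.Tendsto (fun t : ℝ => lamSq + t ^ 2) (nhds 0) (nhds (lamSq + 0 ^ 2)) :=
      (continuous_const.add (continuous_pow 2)).tendsto 0
    simpa using this.mono_left nhdsWithin_le_nhds
  have h2 : Filter.Tendsto (fun t => (XiSS t - 1) / t ^ 2) (nhdsWithin 0 (Set.Ioi 0))
      (nhds ((c₁ * ((1 + Hs) / 6) + c₂ * ((1 - Hs) / 6)) / lamSq)) := by
    have hnum : Filter.Tendsto
        (fun t => c₁ * ((t * coth (t * (1 + Hs) / 2) - 2 / (1 + Hs)) / t ^ 2)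
          + c₂ * ((t * coth (t * (1 - Hs) / 2) - 2 / (1 - Hs)) / t ^ 2))
        (nhdsWithin 0 (Set.Ioi 0)) (nhds (c₁ * ((1 + Hs) / 6) + c₂ * ((1 - Hs) / 6))) :=
      (tendsto_const_nhds.mul (coth_key hHp)).add (tendsto_const_nhds.mul (coth_key hHm))
    have := hnum.div hdenlim (ne_of_gt hlam)
    refine this.congr' ?_
    filter_upwards [self_mem_nhdsWithin] with t ht
    have ht0 : t ≠ 0 := ne_of_gt ht
    have hden : lamSq + t ^ 2 ≠ 0 := by positivity
    simp only [Pi.div_apply]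
    rw [hdiff t]
    field_simp
  have hvalL : (c₁ * ((1 + Hs) / 6) + c₂ * ((1 - Hs) / 6)) / lamSq = L := by
    rw [hc₁, hc₂, hL, hlamSq]
    field_simp
    ring
  rw [hvalL] at h2
  -- XiSS t > 1 for t > 0
  have hgt : ∀ t : ℝ, 0 < t → 1 < XiSS t := by
    intro t ht
    have h1 := coth_gt hHp ht
    have h2' := coth_gt hHm ht
    have hc₁p : 0 < c₁ := by rw [hc₁]; positivity
    have hc₂p : 0 < c₂ := by rw [hc₂]; positivity
    have hdenp : 0 < lamSq + t ^ 2 := by positivity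
    have := hdiff t
    nlinarith [mul_pos hc₁p (sub_pos.mpr h1), mul_pos hc₂p (sub_pos.mpr h2'),
      div_pos (add_pos (mul_pos hc₁p (sub_pos.mpr h1)) (mul_pos hc₂p (sub_pos.mpr h2'))) hdenp]
  -- XiSS → 1
  have h3 : Filter.Tendsto XiSS (nhdsWithin 0 (Set.Ioi 0)) (nhds 1) := by
    have hsq : Filter.Tendsto (fun t : ℝ => t ^ 2) (nhdsWithin 0 (Set.Ioi 0)) (nhds 0) := by
      have := (continuous_pow 2).tendsto (0:ℝ)
      simpa using this.mono_left nhdsWithin_le_nhds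
    have hmul := h2.mul hsq
    rw [mul_zero] at hmul
    have hsub : Filter.Tendsto (fun t => XiSS t - 1) (nhdsWithin 0 (Set.Ioi 0)) (nhds 0) := by
      refine hmul.congr' ?_
      filter_upwards [self_mem_nhdsWithin] with t ht
      have ht0 : t ≠ 0 := ne_of_gt ht
      field_simp
    have := hsub.add (tendsto_const_nhds (x := (1:ℝ)))
    simpa using this
  -- log part
  have hglim : Filter.Tendsto (fun y => Real.log y / (y - 1)) (nhdsWithin 1 {(1:ℝ)}ᶜ)
      (nhds 1) := by
    have hd : HasDerivAt Real.log 1⁻¹ 1 := Real.hasDerivAt_log one_ne_zero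
    rw [inv_one, hasDerivAt_iff_tendsto_slope] at hd
    refine hd.congr (fun y => ?_)
    simp [slope_def_field, Real.log_one]
  have hXito : Filter.Tendsto XiSS (nhdsWithin 0 (Set.Ioi 0)) (nhdsWithin 1 {(1:ℝ)}ᶜ) := by
    rw [tendsto_nhdsWithin_iff]
    refine ⟨h3, ?_⟩
    filter_upwards [self_mem_nhdsWithin] with t ht
    exact ne_of_gt (hgt t ht)
  have h4 : Filter.Tendsto (fun t => Real.log (XiSS t) / (XiSS t - 1))
      (nhdsWithin 0 (Set.Ioi 0)) (nhds 1) := hglim.comp hXito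
  have hfinal := h4.mul h2
  rw [one_mul] at hfinal
  refine hfinal.congr' ?_
  filter_upwards [self_mem_nhdsWithin] with t ht
  have ht0 : t ≠ 0 := ne_of_gt ht
  have hne : XiSS t - 1 ≠ 0 := sub_ne_zero.mpr (ne_of_gt (hgt t ht))
  field_simp
end

section
/- Suppose 0 < H₂ < H₁. Then there exists a real number γ with π/(2H₁) < γ < π/(2H₂) such that sin(γH₁) ≠ 0, sin(γH₂) ≠ 0 and (1/μ₁)·cot(γH₁) + (1/μ₂)·cot(γH₂) = 0. -/
/-- cot is antitone on (0, π). -/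
lemma cot_anti {x y : ℝ} (hx : 0 < x) (hxy : x ≤ y) (hy : y < Real.pi) :
    Real.cot y ≤ Real.cot x := by
  have hsx : 0 < Real.sin x := Real.sin_pos_of_pos_of_lt_pi hx (lt_of_le_of_lt hxy hy)
  have hsy : 0 < Real.sin y := Real.sin_pos_of_pos_of_lt_pi (lt_of_lt_of_le hx hxy) hy
  have hsd : 0 ≤ Real.sin (y - x) := by
    apply Real.sin_nonneg_of_nonneg_of_le_pi (by linarith)
    linarith
  rw [Real.cot_eq_cos_div_sin, Real.cot_eq_cos_div_sin, div_le_div_iff₀ hsy hsx]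
  nlinarith [Real.sin_sub y x]

lemma cot_neg_of {x : ℝ} (h1 : Real.pi / 2 < x) (h2 : x < Real.pi) : Real.cot x < 0 := by
  rw [Real.cot_eq_cos_div_sin]
  apply div_neg_of_neg_of_pos
  · exact Real.cos_neg_of_pi_div_two_lt_of_lt h1 (by linarith [Real.pi_pos])
  · exact Real.sin_pos_of_pos_of_lt_pi (lt_trans (by positivity) h1) h2

lemma cot_pos_of {x : ℝ} (h1 : 0 < x) (h2 : x < Real.pi / 2) : 0 < Real.cot x := by
  rw [Real.cot_eq_cos_div_sin]
  apply div_pos (Real.cos_pos_of_mem_Ioo ⟨by linarith [Real.pi_pos], h2⟩)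
  exact Real.sin_pos_of_pos_of_lt_pi h1 (by linarith [Real.pi_pos])

lemma cot_pi_sub (x : ℝ) : Real.cot (Real.pi - x) = -Real.cot x := by
  rw [Real.cot_eq_cos_div_sin, Real.cot_eq_cos_div_sin, Real.cos_pi_sub, Real.sin_pi_sub,
    neg_div]

lemma cot_arctan' {t : ℝ} (ht : 0 < t) : Real.cot (Real.arctan t) = 1 / t := by
  have hc := Real.cos_arctan_pos t
  have h : Real.sin (Real.arctan t) = t * Real.cos (Real.arctan t) := by
    have h2 := Real.tan_arctan t
    rw [Real.tan_eq_sin_div_cos, div_eq_iff hc.ne'] at h2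
    exact h2
  rw [Real.cot_eq_cos_div_sin, h, mul_comm, div_mul_eq_div_div, div_self hc.ne']

set_option maxHeartbeats 1000000 in
/-- if `0 < H₂ < H₁`, then there is `γ` with `π/(2H₁) < γ < π/(2H₂)`,
`sin(γH₁) ≠ 0`, `sin(γH₂) ≠ 0` and `(1/μ₁)cot(γH₁) + (1/μ₂)cot(γH₂) = 0`. -/
theorem statement18 (μ₁ μ₂ H₁ H₂ : ℝ)
    (hμ₁ : 0 < μ₁) (hμ₂ : 0 < μ₂) (hH₂ : 0 < H₂) (hH : H₂ < H₁) :
    ∃ γ : ℝ, Real.pi / (2 * H₁) < γ ∧ γ < Real.pi / (2 * H₂) ∧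
      Real.sin (γ * H₁) ≠ 0 ∧ Real.sin (γ * H₂) ≠ 0 ∧
      (1 / μ₁) * Real.cot (γ * H₁) + (1 / μ₂) * Real.cot (γ * H₂) = 0 := by
  have hπ := Real.pi_pos
  have hH₁ : 0 < H₁ := hH₂.trans hH
  set a : ℝ := Real.pi / (2 * H₁) with ha_def
  have ha_pos : 0 < a := by positivity
  have haH₁ : a * H₁ = Real.pi / 2 := by rw [ha_def]; field_simp
  have haH₂_pos : 0 < a * H₂ := by positivity
  have haH₂_lt : a * H₂ < Real.pi / 2 := by
    rw [ha_def, div_mul_eq_mul_div, div_lt_div_iff₀ (by positivity) (by norm_num)]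
    nlinarith
  have hKpos : 0 < Real.cot (a * H₂) := cot_pos_of haH₂_pos haH₂_lt
  set K : ℝ := μ₁ / μ₂ * Real.cot (a * H₂) with hK_def
  have hK : 0 < K := by positivity
  set ε : ℝ := Real.arctan (1 / (K + 1)) with hε_def
  have hε_pos : 0 < ε := Real.arctan_zero ▸ Real.arctan_strictMono (by positivity)
  have hε_lt : ε < Real.pi / 2 := Real.arctan_lt_pi_div_two _
  have hcotε : Real.cot ε = K + 1 := by
    rw [hε_def, cot_arctan' (by positivity), one_div_one_div]
  set b : ℝ := (Real.pi - ε) / H₁ with hb_def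
  have hbH₁ : b * H₁ = Real.pi - ε := by rw [hb_def, div_mul_cancel₀ _ hH₁.ne']
  have hab : a < b := by
    rw [ha_def, hb_def, div_lt_div_iff₀ (by positivity) hH₁]
    nlinarith
  have hbH₂_lt : b * H₂ < Real.pi := by
    rw [hb_def, div_mul_eq_mul_div, div_lt_iff₀ hH₁]
    nlinarith
  set f : ℝ → ℝ := fun γ =>
    (1 / μ₁) * Real.cot (γ * H₁) + (1 / μ₂) * Real.cot (γ * H₂) with hf_def
  -- sin positivity on the interval
  have hsin1 : ∀ γ ∈ Set.Icc a b, 0 < Real.sin (γ * H₁) := by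
    intro γ ⟨h1, h2⟩
    apply Real.sin_pos_of_pos_of_lt_pi
    · nlinarith
    · nlinarith
  have hsin2 : ∀ γ ∈ Set.Icc a b, 0 < Real.sin (γ * H₂) := by
    intro γ ⟨h1, h2⟩
    apply Real.sin_pos_of_pos_of_lt_pi
    · nlinarith
    · nlinarith
  have hcont : ContinuousOn f (Set.Icc a b) := by
    have : f = fun γ => (1 / μ₁) * (Real.cos (γ * H₁) / Real.sin (γ * H₁)) +
        (1 / μ₂) * (Real.cos (γ * H₂) / Real.sin (γ * H₂)) := by
      funext γ; rw [hf_def]; simp [Real.cot_eq_cos_div_sin]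
    rw [this]
    apply ContinuousOn.add
    · apply ContinuousOn.mul continuousOn_const
      apply ContinuousOn.div
      · fun_prop
      · fun_prop
      · intro γ hγ; exact (hsin1 γ hγ).ne'
    · apply ContinuousOn.mul continuousOn_const
      apply ContinuousOn.div
      · fun_prop
      · fun_prop
      · intro γ hγ; exact (hsin2 γ hγ).ne'
  have hfa : 0 < f a := by
    have : Real.cot (a * H₁) = 0 := by
      rw [haH₁, Real.cot_eq_cos_div_sin, Real.cos_pi_div_two, zero_div]
    rw [hf_def]; simp only [this, mul_zero, zero_add]
    positivity
  have hfb : f b < 0 := by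
    have h1 : Real.cot (b * H₁) = -(K + 1) := by
      rw [hbH₁, cot_pi_sub, hcotε]
    have h2 : Real.cot (b * H₂) ≤ Real.cot (a * H₂) := by
      apply cot_anti haH₂_pos _ hbH₂_lt
      nlinarith
    rw [hf_def]
    simp only [h1]
    have : (1 / μ₂) * Real.cot (a * H₂) = K / μ₁ := by
      rw [hK_def]; field_simp
    have h3 : (1 / μ₂) * Real.cot (b * H₂) ≤ K / μ₁ := by
      rw [← this]
      apply mul_le_mul_of_nonneg_left h2 (by positivity)
    calc (1:ℝ)/μ₁ * -(K+1) + 1/μ₂ * Real.cot (b*H₂)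
        ≤ 1/μ₁ * -(K+1) + K/μ₁ := by linarith
      _ = -(1/μ₁) := by ring
      _ < 0 := neg_lt_zero.mpr (by positivity)
  obtain ⟨γ, hγmem, hγf⟩ := intermediate_value_Ioo' hab.le hcont
    (show (0 : ℝ) ∈ Set.Ioo (f b) (f a) from ⟨hfb, hfa⟩)
  obtain ⟨hγ1, hγ2⟩ := hγmem
  have hγicc : γ ∈ Set.Icc a b := ⟨hγ1.le, hγ2.le⟩
  have hs1 := hsin1 γ hγicc
  have hs2 := hsin2 γ hγicc
  have hγH₁lt : γ * H₁ < Real.pi := by nlinarith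
  have hγH₁gt : Real.pi / 2 < γ * H₁ := by nlinarith
  have hcot1 : Real.cot (γ * H₁) < 0 := cot_neg_of hγH₁gt hγH₁lt
  have hcot2 : 0 < Real.cot (γ * H₂) := by
    have : (1 / μ₂) * Real.cot (γ * H₂) = -((1 / μ₁) * Real.cot (γ * H₁)) := by
      rw [hf_def] at hγf; linarith [hγf]
    nlinarith [div_pos one_pos hμ₁, div_pos one_pos hμ₂]
  have hγlt : γ < Real.pi / (2 * H₂) := by
    by_contra hcon
    push_neg at hcon
    have hge : Real.pi / 2 ≤ γ * H₂ := by
      have := (div_le_iff₀ (by positivity : (0:ℝ) < 2 * H₂)).mp hcon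
      nlinarith
    have hcos : Real.cos (γ * H₂) ≤ 0 :=
      Real.cos_nonpos_of_pi_div_two_le_of_le hge (by nlinarith)
    have : Real.cot (γ * H₂) ≤ 0 := by
      rw [Real.cot_eq_cos_div_sin]
      exact div_nonpos_of_nonpos_of_nonneg hcos hs2.le
    linarith
  exact ⟨γ, hγ1, hγlt, hs1.ne', hs2.ne', hγf⟩
end

section
/- There exist constants κ₀ > 0 and C > 0 such that for every κ ≥ κ₀ there exists a real number γ > 0 with sin(γH₁) ≠ 0, sin(γH₂) ≠ 0, satisfying (1/μ₁)·cot(γH₁) + (1/μ₂)·cot(γH₂) − κγ = 0 and |γ − λ(κ)| ≤ C·λ(κ)/κ; that is, the decay rate satisfies γ₊(κ) = λ(κ)·(1 + O(κ^{−1})) as κ → ∞, and in particular γ₊(κ) = O(κ^{−1/2}). -/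
open Real Set

lemma aux_sin_ge (x : ℝ) (hx : x ∈ Set.Icc (0:ℝ) 1) : x * Real.cos x ≤ Real.sin x := by
  have key : MonotoneOn (fun x => Real.sin x - x * Real.cos x) (Set.Icc (0:ℝ) 1) := by
    apply monotoneOn_of_deriv_nonneg (convex_Icc 0 1)
    · exact (Real.continuous_sin.sub (continuous_id.mul Real.continuous_cos)).continuousOn
    · intro y hy
      exact ((Real.hasDerivAt_sin y).sub ((hasDerivAt_id y).mul (Real.hasDerivAt_cos y))).differentiableAt.differentiableWithinAt
    · intro y hy
      rw [interior_Icc] at hy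
      have hd : HasDerivAt (fun x => Real.sin x - x * Real.cos x) (y * Real.sin y) y := by
        have := (Real.hasDerivAt_sin y).sub ((hasDerivAt_id y).mul (Real.hasDerivAt_cos y))
        exact this.congr_deriv (by rw [id_eq]; ring)
      rw [hd.deriv]
      have : 0 ≤ Real.sin y := Real.sin_nonneg_of_nonneg_of_le_pi hy.1.le
        (le_trans hy.2.le (by linarith [Real.pi_gt_three]))
      exact mul_nonneg hy.1.le this
  have h0 : (0:ℝ) ∈ Set.Icc (0:ℝ) 1 := by constructor <;> norm_num
  have := key h0 hx hx.1
  simp at this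
  linarith

lemma aux_sin_le (x : ℝ) (hx : x ∈ Set.Icc (0:ℝ) 1) :
    Real.sin x - x * Real.cos x ≤ x^2 * Real.sin x := by
  have key : AntitoneOn (fun x => Real.sin x - x * Real.cos x - x^2 * Real.sin x) (Set.Icc (0:ℝ) 1) := by
    apply antitoneOn_of_deriv_nonpos (convex_Icc 0 1)
    · exact ((Real.continuous_sin.sub (continuous_id.mul Real.continuous_cos)).sub
        ((continuous_pow 2).mul Real.continuous_sin)).continuousOn
    · intro y hy
      exact (((Real.hasDerivAt_sin y).sub ((hasDerivAt_id y).mul (Real.hasDerivAt_cos y))).sub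
        (((hasDerivAt_pow 2 y)).mul (Real.hasDerivAt_sin y))).differentiableAt.differentiableWithinAt
    · intro y hy
      rw [interior_Icc] at hy
      have hd : HasDerivAt (fun x => Real.sin x - x * Real.cos x - x^2 * Real.sin x)
          (-(y * Real.sin y) - y^2 * Real.cos y) y := by
        have := ((Real.hasDerivAt_sin y).sub ((hasDerivAt_id y).mul (Real.hasDerivAt_cos y))).sub
          (((hasDerivAt_pow 2 y)).mul (Real.hasDerivAt_sin y))
        exact this.congr_deriv (by rw [id_eq]; norm_num; ring)
      rw [hd.deriv]
      have hs : 0 ≤ Real.sin y := Real.sin_nonneg_of_nonneg_of_le_pi hy.1.le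
        (le_trans hy.2.le (by linarith [Real.pi_gt_three]))
      have hc : 0 ≤ Real.cos y := Real.cos_nonneg_of_mem_Icc
        ⟨by linarith [hy.1, Real.pi_gt_three], by nlinarith [hy.2, Real.pi_gt_three]⟩
      nlinarith [sq_nonneg y, hy.1]
  have h0 : (0:ℝ) ∈ Set.Icc (0:ℝ) 1 := by constructor <;> norm_num
  have := key h0 hx hx.1
  simp at this
  linarith

lemma cot_bounds (x : ℝ) (hx : 0 < x) (hx1 : x ≤ 1) :
    1/x - x ≤ Real.cot x ∧ Real.cot x ≤ 1/x := by
  have hpi : x < Real.pi := by linarith [Real.pi_gt_three]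
  have hs : 0 < Real.sin x := Real.sin_pos_of_pos_of_lt_pi hx hpi
  rw [Real.cot_eq_cos_div_sin]
  constructor
  · have h1 : (1 - x^2)/x ≤ Real.cos x / Real.sin x := by
      rw [div_le_div_iff₀ hx hs]
      have := aux_sin_le x ⟨hx.le, hx1⟩
      nlinarith
    calc 1/x - x = (1 - x^2)/x := by field_simp
      _ ≤ _ := h1
  · rw [div_le_div_iff₀ hs hx]
    have := aux_sin_ge x ⟨hx.le, hx1⟩
    nlinarith

set_option maxHeartbeats 1600000 in
/-- there are `κ₀ > 0` and `C > 0` such that for every `κ ≥ κ₀` the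
transcendental equation `(1/μ₁)cot(γH₁) + (1/μ₂)cot(γH₂) − κγ = 0` has a solution
`γ > 0` with `|γ − λ(κ)| ≤ C·λ(κ)/κ`, where
`λ(κ) = √((μ₁H₁ + μ₂H₂)/(μ₁μ₂H₁H₂κ))`; i.e. `γ₊(κ) = λ(κ)(1 + O(κ⁻¹))` as `κ → ∞`. -/
theorem statement19 (μ₁ μ₂ H₁ H₂ : ℝ)
    (hμ₁ : 0 < μ₁) (hμ₂ : 0 < μ₂) (hH₁ : 0 < H₁) (hH₂ : 0 < H₂) :
    ∃ κ₀ > (0 : ℝ), ∃ C > (0 : ℝ), ∀ κ : ℝ, κ₀ ≤ κ →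
      ∃ γ > (0 : ℝ), Real.sin (γ * H₁) ≠ 0 ∧ Real.sin (γ * H₂) ≠ 0 ∧
        (1 / μ₁) * Real.cot (γ * H₁) + (1 / μ₂) * Real.cot (γ * H₂) - κ * γ = 0 ∧
        |γ - Real.sqrt ((μ₁ * H₁ + μ₂ * H₂) / (μ₁ * μ₂ * H₁ * H₂ * κ))|
          ≤ C * Real.sqrt ((μ₁ * H₁ + μ₂ * H₂) / (μ₁ * μ₂ * H₁ * H₂ * κ)) / κ := by
  set S : ℝ := (μ₁ * H₁ + μ₂ * H₂) / (μ₁ * μ₂ * H₁ * H₂) with hS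
  set K : ℝ := H₁/μ₁ + H₂/μ₂ with hK
  clear_value S K
  have hSpos : 0 < S := by rw [hS]; positivity
  have hKpos : 0 < K := by rw [hK]; positivity
  have hSsum : S = 1/(μ₁*H₁) + 1/(μ₂*H₂) := by
    rw [hS, div_add_div _ _ (by positivity) (by positivity), div_eq_div_iff (by positivity) (by positivity)]
    ring
  refine ⟨2*K + 9/4*S*(H₁+H₂)^2 + 1, by positivity, K, hKpos, ?_⟩
  intro κ hκ
  have h9pos : 0 < 9/4*S*(H₁+H₂)^2 := by positivity
  have hκpos : (0:ℝ) < κ := by linarith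
  have hκ2K : 2*K ≤ κ := by linarith
  have hκS : 9/4*S*(H₁+H₂)^2 ≤ κ := by linarith
  -- rewrite the sqrt argument
  have hargeq : (μ₁ * H₁ + μ₂ * H₂) / (μ₁ * μ₂ * H₁ * H₂ * κ) = S / κ := by
    rw [hS, div_div]
  rw [hargeq]
  set lam : ℝ := Real.sqrt (S / κ) with hlam
  clear_value lam
  have hlampos : 0 < lam := by rw [hlam]; exact Real.sqrt_pos.mpr (by positivity)
  have hlamsq : lam^2 = S / κ := by rw [hlam]; exact Real.sq_sqrt (by positivity)
  set θ : ℝ := K / κ with hθ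
  clear_value θ
  have hθpos : 0 < θ := by rw [hθ]; positivity
  have hθhalf : θ ≤ 1/2 := by rw [hθ, div_le_iff₀ hκpos]; linarith
  set a : ℝ := lam * (1 - θ) with ha
  set b : ℝ := lam * (1 + θ) with hb
  clear_value a b
  have hapos : 0 < a := by
    rw [ha]; apply mul_pos hlampos; linarith
  have hab : a ≤ b := by
    rw [ha, hb]; apply mul_le_mul_of_nonneg_left (by linarith) hlampos.le
  have hblam : b ≤ 3/2 * lam := by
    rw [hb]; nlinarith
  -- smallness: b * H₁ ≤ 1 and b * H₂ ≤ 1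
  have hbH : ∀ H : ℝ, 0 < H → H ≤ H₁ + H₂ → b * H ≤ 1 := by
    intro H hH hHle
    have hbHpos : 0 < b * H := mul_pos (hapos.trans_le hab) hH
    have h1 : (b*H)^2 ≤ (3/2*lam*(H₁+H₂))^2 := by
      apply pow_le_pow_left₀ hbHpos.le
      apply mul_le_mul (by linarith) hHle hH.le (by positivity)
    have h2 : (3/2*lam*(H₁+H₂))^2 = 9/4 * (S/κ) * (H₁+H₂)^2 := by
      rw [mul_pow, mul_pow, hlamsq]; ring
    have h3 : 9/4 * (S/κ) * (H₁+H₂)^2 ≤ 1 := by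
      have he : 9/4 * (S/κ) * (H₁+H₂)^2 = (9/4*S*(H₁+H₂)^2)/κ := by ring
      rw [he, div_le_one hκpos]
      exact hκS
    nlinarith
  have hbH1 : b * H₁ ≤ 1 := hbH H₁ hH₁ (by linarith)
  have hbH2 : b * H₂ ≤ 1 := hbH H₂ hH₂ (by linarith)
  -- properties of points in [a,b]
  have hmem : ∀ γ ∈ Set.Icc a b, 0 < γ ∧ 0 < γ*H₁ ∧ γ*H₁ ≤ 1 ∧ 0 < γ*H₂ ∧ γ*H₂ ≤ 1 := by
    intro γ hγ
    have hγpos : 0 < γ := lt_of_lt_of_le hapos hγ.1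
    refine ⟨hγpos, by positivity, ?_, by positivity, ?_⟩
    · exact le_trans (mul_le_mul_of_nonneg_right hγ.2 hH₁.le) hbH1
    · exact le_trans (mul_le_mul_of_nonneg_right hγ.2 hH₂.le) hbH2
  have hsinne : ∀ γ ∈ Set.Icc a b, Real.sin (γ*H₁) ≠ 0 ∧ Real.sin (γ*H₂) ≠ 0 := by
    intro γ hγ
    obtain ⟨h0, h1, h2, h3, h4⟩ := hmem γ hγ
    constructor
    · exact ne_of_gt (Real.sin_pos_of_pos_of_lt_pi h1 (by linarith [Real.pi_gt_three]))
    · exact ne_of_gt (Real.sin_pos_of_pos_of_lt_pi h3 (by linarith [Real.pi_gt_three]))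
  set f : ℝ → ℝ := fun γ => (1/μ₁) * Real.cot (γ*H₁) + (1/μ₂) * Real.cot (γ*H₂) - κ*γ with hf
  -- continuity on [a,b]
  have hcont : ContinuousOn f (Set.Icc a b) := by
    have hc : ∀ H : ℝ, ((0:ℝ) < H) → (H ≤ H₁ + H₂) →
        ContinuousOn (fun γ => Real.cot (γ*H)) (Set.Icc a b) := by
      intro H hH hHle
      have : ∀ γ ∈ Set.Icc a b, Real.sin (γ*H) ≠ 0 := by
        intro γ hγ
        have hγpos : 0 < γ := lt_of_lt_of_le hapos hγ.1
        have h1 : 0 < γ*H := by positivity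
        have h2 : γ*H ≤ 1 := le_trans (mul_le_mul_of_nonneg_right hγ.2 hH.le) (hbH H hH hHle)
        exact ne_of_gt (Real.sin_pos_of_pos_of_lt_pi h1 (by linarith [Real.pi_gt_three]))
      have : ContinuousOn (fun γ => Real.cos (γ*H) / Real.sin (γ*H)) (Set.Icc a b) := by
        apply ContinuousOn.div
        · exact (Real.continuous_cos.comp (continuous_id.mul continuous_const)).continuousOn
        · exact (Real.continuous_sin.comp (continuous_id.mul continuous_const)).continuousOn
        · exact this
      simpa [Real.cot_eq_cos_div_sin] using this
    exact ((continuousOn_const.mul (hc H₁ hH₁ (by linarith))).add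
      (continuousOn_const.mul (hc H₂ hH₂ (by linarith)))).sub
      ((continuous_const.mul continuous_id).continuousOn)
  -- bounds on f
  have hbound : ∀ γ ∈ Set.Icc a b,
      S/γ - K*γ - κ*γ ≤ f γ ∧ f γ ≤ S/γ - κ*γ := by
    intro γ hγ
    obtain ⟨h0, h1, h2, h3, h4⟩ := hmem γ hγ
    obtain ⟨hl1, hu1⟩ := cot_bounds (γ*H₁) h1 h2
    obtain ⟨hl2, hu2⟩ := cot_bounds (γ*H₂) h3 h4
    have hid : S/γ = (1/μ₁)*(1/(γ*H₁)) + (1/μ₂)*(1/(γ*H₂)) := by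
      rw [hSsum]
      ring
    have hid2 : K*γ = (1/μ₁)*(γ*H₁) + (1/μ₂)*(γ*H₂) := by
      rw [hK]
      ring
    constructor
    · show S/γ - K*γ - κ*γ ≤ (1/μ₁) * Real.cot (γ*H₁) + (1/μ₂) * Real.cot (γ*H₂) - κ*γ
      have e1 : (1/μ₁) * (1/(γ*H₁) - γ*H₁) ≤ (1/μ₁) * Real.cot (γ*H₁) :=
        mul_le_mul_of_nonneg_left hl1 (by positivity)
      have e2 : (1/μ₂) * (1/(γ*H₂) - γ*H₂) ≤ (1/μ₂) * Real.cot (γ*H₂) :=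
        mul_le_mul_of_nonneg_left hl2 (by positivity)
      rw [hid, hid2]
      linarith [e1, e2]
    · show (1/μ₁) * Real.cot (γ*H₁) + (1/μ₂) * Real.cot (γ*H₂) - κ*γ ≤ S/γ - κ*γ
      have e1 : (1/μ₁) * Real.cot (γ*H₁) ≤ (1/μ₁) * (1/(γ*H₁)) :=
        mul_le_mul_of_nonneg_left hu1 (by positivity)
      have e2 : (1/μ₂) * Real.cot (γ*H₂) ≤ (1/μ₂) * (1/(γ*H₂)) :=
        mul_le_mul_of_nonneg_left hu2 (by positivity)
      rw [hid]
      linarith [e1, e2]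
  -- sign at the endpoints
  have hamem : a ∈ Set.Icc a b := ⟨le_refl a, hab⟩
  have hbmem : b ∈ Set.Icc a b := ⟨hab, le_refl b⟩
  have hfa : 0 ≤ f a := by
    have hlow := (hbound a hamem).1
    have key : 0 < S/a - K*a - κ*a := by
      set P : ℝ := S / κ with hP
      clear_value P
      have hPpos : 0 < P := by rw [hP]; positivity
      have hPS : κ * P = S := by
        rw [hP, mul_div_assoc', mul_comm, mul_div_assoc, div_self hκpos.ne', mul_one]
      have ha2 : a^2 = P * (1-θ)^2 := by rw [ha, mul_pow, hlamsq, hP]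
      have hKa : κ*θ = K := by rw [hθ, mul_comm, div_mul_cancel₀ K hκpos.ne']
      have hineq : (K + κ) * a^2 < S := by
        rw [ha2, ← hPS]
        nlinarith [mul_pos hκpos hPpos, mul_pos (mul_pos hκpos hPpos) hθpos, hθpos,
          hθhalf, hKa, hPpos, hκpos, sq_nonneg θ, sq_nonneg (1-θ),
          mul_pos (mul_pos (mul_pos hκpos hPpos) hθpos) hθpos]
      have h7 : K*a + κ*a < S/a := by
        rw [lt_div_iff₀ hapos]
        nlinarith [hineq]
      linarith
    exact le_trans key.le hlow
  have hfb : f b ≤ 0 := by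
    have hup := (hbound b hbmem).2
    have hbpos : 0 < b := hapos.trans_le hab
    have key : S/b - κ*b ≤ 0 := by
      set P : ℝ := S / κ with hP
      clear_value P
      have hPpos : 0 < P := by rw [hP]; positivity
      have hPS : κ * P = S := by
        rw [hP, mul_div_assoc', mul_comm, mul_div_assoc, div_self hκpos.ne', mul_one]
      have hb2 : b^2 = P * (1+θ)^2 := by rw [hb, mul_pow, hlamsq, hP]
      have hineq : S ≤ κ * b^2 := by
        rw [hb2, ← mul_assoc, hPS]
        nlinarith [mul_pos hSpos hθpos, mul_pos (mul_pos hSpos hθpos) hθpos]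
      rw [sub_nonpos, div_le_iff₀ hbpos]
      nlinarith [hineq]
    exact hup.trans key
  -- intermediate value theorem
  have hivt := intermediate_value_Icc' hab hcont
  have h0mem : (0:ℝ) ∈ Set.Icc (f b) (f a) := ⟨hfb, hfa⟩
  obtain ⟨γ, hγmem, hfγ⟩ := hivt h0mem
  obtain ⟨hγpos, _, _, _, _⟩ := hmem γ hγmem
  obtain ⟨hs1, hs2⟩ := hsinne γ hγmem
  refine ⟨γ, hγpos, hs1, hs2, hfγ, ?_⟩
  -- distance bound
  have hd1 : γ - lam ≤ lam * θ := by
    have := hγmem.2; rw [hb] at this; nlinarith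
  have hd2 : -(lam * θ) ≤ γ - lam := by
    have := hγmem.1; rw [ha] at this; nlinarith
  rw [abs_le]
  have hCeq : K * lam / κ = lam * θ := by rw [hθ]; ring
  exact ⟨by rw [hCeq]; exact hd2, by rw [hCeq]; exact hd1⟩
end
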